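/- Let A be an m×n matrix over ℝ≥0, b ∈ ℝ≥0^m, and let X ⊆ ℝ≥0^n be an interval, X = {x : x_j ∈ X_j for all j} with each X_j ⊆ ℝ≥0 nonempty and order-convex. Then there exists x ∈ X with A⊗x = b if and only if both of the following hold: (a) for every j there exists s ∈ X_j with (s : [0,∞]) ≤ γ*_j(A,b) (that is, γ*_j(A,b) lies in the upward closure X_j↑ of X_j in [0,∞]); and (b) for every i with b_i ≠ 0 there exists j such that i ∈ M_j(A,b) and γ*_j(A,b) = (t : [0,∞]) for some t ∈ X_j. -/

import Mathlib

open scoped NNReal ENNReal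

noncomputable section

namespace MaxAlg

/-- Max-algebraic matrix–vector product over ℝ≥0: (A⊗x)_i = max_j a_{ij}·x_j. -/
def mulVec {m n : ℕ} (A : Matrix (Fin m) (Fin n) ℝ≥0) (x : Fin n → ℝ≥0) :
    Fin m → ℝ≥0 :=
  fun i => Finset.univ.sup fun j => A i j * x j

/-- Support of a vector. -/
def supp {m : ℕ} (x : Fin m → ℝ≥0) : Set (Fin m) := {i | x i ≠ 0}

/-- Eigencone V(A,λ) = {x : A⊗x = λ·x}. -/
def eigencone {n : ℕ} (A : Matrix (Fin n) (Fin n) ℝ≥0) (lam : ℝ≥0) :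
    Set (Fin n → ℝ≥0) :=
  {x | mulVec A x = fun i => lam * x i}

/-- A cycle of length `k ≥ 1` is encoded as `σ : ℕ → Fin n` with `σ k = σ 0`
(standing for a function on ℤ/kℤ). -/
def IsCycle {n : ℕ} (k : ℕ) (σ : ℕ → Fin n) : Prop := 1 ≤ k ∧ σ k = σ 0

/-- The cycle lies in a set S: all its values belong to S. -/
def LiesIn {n : ℕ} (k : ℕ) (σ : ℕ → Fin n) (S : Set (Fin n)) : Prop :=
  ∀ t < k, σ t ∈ S

/-- Weight of a cycle in A: ∏_t a_{σ(t),σ(t+1)}. -/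
def cycleWeight {n : ℕ} (A : Matrix (Fin n) (Fin n) ℝ≥0) (k : ℕ) (σ : ℕ → Fin n) : ℝ≥0 :=
  ∏ t ∈ Finset.range k, A (σ t) (σ (t + 1))

/-- γ*_j(A,b): the greatest α ∈ [0,∞] with α·a_{ij} ≤ b_i for all i
(conventions 0·∞ = ∞·0 = 0 are built into ℝ≥0∞ multiplication). -/
def gammaStar {m n : ℕ} (A : Matrix (Fin m) (Fin n) ℝ≥0) (b : Fin m → ℝ≥0) (j : Fin n) :
    ℝ≥0∞ :=
  sSup {α : ℝ≥0∞ | ∀ i, α * (A i j : ℝ≥0∞) ≤ (b i : ℝ≥0∞)}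

/-- M_j(A,b) = {i : a_{ij}·γ*_j(A,b) = b_i ≠ 0}. -/
def Mset {m n : ℕ} (A : Matrix (Fin m) (Fin n) ℝ≥0) (b : Fin m → ℝ≥0) (j : Fin n) :
    Set (Fin m) :=
  {i | (A i j : ℝ≥0∞) * gammaStar A b j = (b i : ℝ≥0∞) ∧ b i ≠ 0}

/-- Max-algebraic column span of A. -/
def span {m n : ℕ} (A : Matrix (Fin m) (Fin n) ℝ≥0) : Set (Fin m → ℝ≥0) :=
  {y | ∃ c : Fin n → ℝ≥0, ∀ r, y r = Finset.univ.sup fun j => A r j * c j}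

/-- Max-algebraic column span of A with its i-th column removed. -/
def spanMinus {m n : ℕ} (A : Matrix (Fin m) (Fin n) ℝ≥0) (i : Fin n) :
    Set (Fin m → ℝ≥0) :=
  {y | ∃ c : Fin n → ℝ≥0, ∀ r, y r = (Finset.univ.erase i).sup fun j => A r j * c j}

/-- N^λ(A) = {i : ∃ x ∈ V(A,λ), x_i > 0}. -/
def Nlam {n : ℕ} (A : Matrix (Fin n) (Fin n) ℝ≥0) (lam : ℝ≥0) : Set (Fin n) :=
  {i | ∃ x ∈ eigencone A lam, 0 < x i}

/-- (i,j) is an edge of crit(A,λ). -/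
def CritEdge {n : ℕ} (A : Matrix (Fin n) (Fin n) ℝ≥0) (lam : ℝ≥0) (i j : Fin n) : Prop :=
  ∃ k σ, IsCycle k σ ∧ LiesIn k σ (Nlam A lam) ∧ cycleWeight A k σ = lam ^ k ∧
    ∃ t < k, σ t = i ∧ σ (t + 1) = j

/-- i is a critical node: some cycle lying in N^λ(A) with weight λ^k passes through i. -/
def CritNode {n : ℕ} (A : Matrix (Fin n) (Fin n) ℝ≥0) (lam : ℝ≥0) (i : Fin n) : Prop :=
  ∃ k σ, IsCycle k σ ∧ LiesIn k σ (Nlam A lam) ∧ cycleWeight A k σ = lam ^ k ∧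
    ∃ t < k, σ t = i

/-- (i,j) is an edge of crit(A,x,λ). -/
def CritEdgeOn {n : ℕ} (A : Matrix (Fin n) (Fin n) ℝ≥0) (lam : ℝ≥0) (x : Fin n → ℝ≥0)
    (i j : Fin n) : Prop :=
  ∃ k σ, IsCycle k σ ∧ LiesIn k σ (supp x) ∧ cycleWeight A k σ = lam ^ k ∧
    ∃ t < k, σ t = i ∧ σ (t + 1) = j

/-- x is a simple image eigenvector of A associated with λ. -/
def SimpleImageEig {n : ℕ} (A : Matrix (Fin n) (Fin n) ℝ≥0) (lam : ℝ≥0)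
    (x : Fin n → ℝ≥0) : Prop :=
  x ∈ eigencone A lam ∧
    ∀ y : Fin n → ℝ≥0, mulVec A y = (fun i => lam * x i) → y = x

/-- The box (interval) determined by component intervals X_j. -/
def box {n : ℕ} (X : Fin n → Set ℝ≥0) : Set (Fin n → ℝ≥0) := {x | ∀ j, x j ∈ X j}

/-- Each component set is a nonempty order-convex interval of ℝ≥0. -/
def IsInterval {n : ℕ} (X : Fin n → Set ℝ≥0) : Prop :=
  ∀ j, (X j).Nonempty ∧ (X j).OrdConnected

/-- A has X-simple image eigencone associated with λ. -/
def XSimple {n : ℕ} (A : Matrix (Fin n) (Fin n) ℝ≥0) (lam : ℝ≥0)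
    (X : Fin n → Set ℝ≥0) : Prop :=
  ∀ x ∈ eigencone A lam ∩ box X,
    ∀ y ∈ box X, mulVec A y = (fun i => lam * x i) → y = x

/-!
`γ*(A,b)` is the greatest subsolution: `A ⊗ x ≤ b` iff `x_j ≤ γ*_j` for all `j`. A subsolution
`x` reaches `b_i ≠ 0` only through some `a_ij x_j = b_i`, which forces `x_j = γ*_j` and `i ∈ M_j`.
So inside a box it is best to take `x_j = γ*_j` whenever `γ*_j ∈ X_j`, and otherwise any element
of `X_j` below `γ*_j`.
-/

variable {m n : ℕ} (A : Matrix (Fin m) (Fin n) ℝ≥0) (b : Fin m → ℝ≥0)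

lemma le_gammaStar_iff {j : Fin n} {α : ℝ≥0∞} :
    α ≤ gammaStar A b j ↔ ∀ i, α * (A i j : ℝ≥0∞) ≤ (b i : ℝ≥0∞) := by
  refine ⟨fun hα i => ?_, fun hα => le_sSup hα⟩
  have hγ : gammaStar A b j * A i j ≤ b i := by
    rw [gammaStar, sSup_eq_iSup', ENNReal.iSup_mul]
    exact iSup_le fun β => β.2 i
  exact (mul_le_mul_left hα _).trans hγ

lemma coe_le_gammaStar_iff {j : Fin n} {s : ℝ≥0} :
    (s : ℝ≥0∞) ≤ gammaStar A b j ↔ ∀ i, A i j * s ≤ b i := by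
  simp only [le_gammaStar_iff, ← ENNReal.coe_mul, ENNReal.coe_le_coe, mul_comm]

lemma mulVec_le_iff {x : Fin n → ℝ≥0} :
    mulVec A x ≤ b ↔ ∀ j, (x j : ℝ≥0∞) ≤ gammaStar A b j := by
  simp only [Pi.le_def, mulVec, Finset.sup_le_iff, Finset.mem_univ, true_implies,
    coe_le_gammaStar_iff]
  exact forall_comm

lemma exists_mul_eq_mulVec_apply {x : Fin n → ℝ≥0} {i : Fin m} (h : mulVec A x i ≠ 0) :
    ∃ j, A i j * x j = mulVec A x i := by
  have hne : (Finset.univ : Finset (Fin n)).Nonempty :=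
    Finset.nonempty_iff_ne_empty.2 fun hu => h (by simp [mulVec, hu])
  obtain ⟨j, -, hj⟩ := Finset.exists_mem_eq_sup _ hne fun j => A i j * x j
  exact ⟨j, hj.symm⟩

lemma gammaStar_eq_of_mul_eq {i : Fin m} {j : Fin n} {s : ℝ≥0}
    (hs : (s : ℝ≥0∞) ≤ gammaStar A b j) (h : A i j * s = b i) (hb : b i ≠ 0) :
    gammaStar A b j = s := by
  have hA : (A i j : ℝ≥0∞) ≠ 0 := by
    rintro hA
    exact hb (by rw [← h, ENNReal.coe_eq_zero.1 hA, zero_mul])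
  refine le_antisymm ?_ hs
  have := (le_gammaStar_iff A b (j := j)).1 le_rfl i
  rw [← h, ENNReal.coe_mul, mul_comm (A i j : ℝ≥0∞)] at this
  exact (ENNReal.mul_le_mul_iff_left hA ENNReal.coe_ne_top).1 this

theorem mulVec_eq_iff {x : Fin n → ℝ≥0} :
    mulVec A x = b ↔ (∀ j, (x j : ℝ≥0∞) ≤ gammaStar A b j) ∧
      ∀ i, b i ≠ 0 → ∃ j, i ∈ Mset A b j ∧ gammaStar A b j = x j := by
  constructor
  · intro hx
    have hle := (mulVec_le_iff A b).1 hx.le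
    refine ⟨hle, fun i hb => ?_⟩
    obtain ⟨j, hj⟩ := exists_mul_eq_mulVec_apply A (x := x) (i := i) (by rwa [hx])
    rw [hx] at hj
    have hγ := gammaStar_eq_of_mul_eq A b (hle j) hj hb
    exact ⟨j, ⟨by rw [hγ, ← ENNReal.coe_mul, hj], hb⟩, hγ⟩
  · rintro ⟨hle, hcover⟩
    refine le_antisymm ((mulVec_le_iff A b).2 hle) fun i => ?_
    by_cases hb : b i = 0
    · exact hb ▸ zero_le
    obtain ⟨j, ⟨hM, -⟩, hγ⟩ := hcover i hb
    rw [hγ, ← ENNReal.coe_mul, ENNReal.coe_inj] at hM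
    exact hM ▸ Finset.le_sup (f := fun j => A i j * x j) (Finset.mem_univ j)

theorem stmt14_general {m n : ℕ} (A : Matrix (Fin m) (Fin n) ℝ≥0) (b : Fin m → ℝ≥0)
    (X : Fin n → Set ℝ≥0) :
    (∃ x ∈ box X, mulVec A x = b) ↔
      ((∀ j : Fin n, ∃ s ∈ X j, (s : ℝ≥0∞) ≤ gammaStar A b j) ∧
       (∀ i : Fin m, b i ≠ 0 →
          ∃ j : Fin n, i ∈ Mset A b j ∧ ∃ t ∈ X j, gammaStar A b j = (t : ℝ≥0∞))) := by
  classical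
  constructor
  · rintro ⟨x, hxX, hx⟩
    obtain ⟨hle, hcover⟩ := (mulVec_eq_iff A b).1 hx
    refine ⟨fun j => ⟨x j, hxX j, hle j⟩, fun i hb => ?_⟩
    obtain ⟨j, hM, hγ⟩ := hcover i hb
    exact ⟨j, hM, x j, hxX j, hγ⟩
  · rintro ⟨hsub, hcover⟩
    choose s hsX hs using hsub
    let x : Fin n → ℝ≥0 := fun j =>
      if ∃ t ∈ X j, gammaStar A b j = t then (gammaStar A b j).toNNReal else s j
    have hx_of_eq {j : Fin n} {t : ℝ≥0} (ht : t ∈ X j) (hγ : gammaStar A b j = t) : x j = t := by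
      simp only [x]
      rw [if_pos ⟨t, ht, hγ⟩, hγ, ENNReal.toNNReal_coe]
    have hx (j : Fin n) : x j ∈ X j ∧ (x j : ℝ≥0∞) ≤ gammaStar A b j := by
      by_cases h : ∃ t ∈ X j, gammaStar A b j = t
      · obtain ⟨t, ht, hγ⟩ := h
        rw [hx_of_eq ht hγ, hγ]
        exact ⟨ht, le_rfl⟩
      · simpa only [x, if_neg h] using ⟨hsX j, hs j⟩
    refine ⟨x, fun j => (hx j).1, (mulVec_eq_iff A b).2 ⟨fun j => (hx j).2, fun i hb => ?_⟩⟩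
    obtain ⟨j, hM, t, ht, hγ⟩ := hcover i hb
    exact ⟨j, hM, by rw [hx_of_eq ht hγ, hγ]⟩

/-- existence of a solution of A⊗x = b in an interval X. -/
theorem stmt14 {m n : ℕ} (A : Matrix (Fin m) (Fin n) ℝ≥0) (b : Fin m → ℝ≥0)
    (X : Fin n → Set ℝ≥0) (hX : IsInterval X) :
    (∃ x ∈ box X, mulVec A x = b) ↔
      ((∀ j : Fin n, ∃ s ∈ X j, (s : ℝ≥0∞) ≤ gammaStar A b j) ∧
       (∀ i : Fin m, b i ≠ 0 →
          ∃ j : Fin n, i ∈ Mset A b j ∧ ∃ t ∈ X j, gammaStar A b j = (t : ℝ≥0∞))) :=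
  stmt14_general A b X

end MaxAlg

end
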